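/- (gen is a generalisation at the term level.) For every ground type τ and every term t with t : τ, the term t is an instance of gen_τ(t): there exists a substitution θ with gen_τ(t)θ = t (for any choice of distinct fresh variables, not occurring in t, used in computing gen_τ(t)). -/

import Mathlib

/-- First-order terms over countably infinite sets of variables (ℕ)
and function symbols (ℕ). -/
inductive Term : Type where
  | var : ℕ → Term
  | app : ℕ → List Term → Term

namespace Term

/-- Applying a substitution (a mapping from variables to terms) homomorphically. -/
def subst (θ : ℕ → Term) : Term → Term
  | var v => θ v
  | app f ts => app f (ts.attach.map (fun x => x.1.subst θ))
decreasing_by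
  have := List.sizeOf_lt_of_mem x.2
  simp only [Term.app.sizeOf_spec]
  omega

/-- A term is ground if it contains no variables. -/
inductive Ground : Term → Prop where
  | app : ∀ f ts, (∀ t ∈ ts, Ground t) → Ground (app f ts)

/-- The variable `v` occurs in the term. -/
inductive Occurs (v : ℕ) : Term → Prop where
  | var : Occurs v (var v)
  | app : ∀ f ts t, t ∈ ts → Occurs v t → Occurs v (app f ts)

/-- `s` is an instance of `t` if `s = tθ` for some substitution `θ`. -/
def IsInstanceOf (s t : Term) : Prop := ∃ θ : ℕ → Term, t.subst θ = s

/-- Two terms are variants if each is an instance of the other. -/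
def Variant (s t : Term) : Prop := s.IsInstanceOf t ∧ t.IsInstanceOf s

end Term

/-- Types: type variables, the distinguished 0-ary constructors
`static`, `dynamic`, `nonvar`, and other constructors applied to types. -/
inductive Ty : Type where
  | var : ℕ → Ty
  | static : Ty
  | dynamic : Ty
  | nonvar : Ty
  | con : ℕ → List Ty → Ty

namespace Ty

/-- Applying a type substitution. -/
def subst (σ : ℕ → Ty) : Ty → Ty
  | var v => σ v
  | static => static
  | dynamic => dynamic
  | nonvar => nonvar
  | con c args => con c (args.attach.map (fun x => x.1.subst σ))
decreasing_by
  have := List.sizeOf_lt_of_mem x.2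
  simp only [Ty.con.sizeOf_spec]
  omega

/-- A type is ground if it contains no type variables. -/
inductive Ground : Ty → Prop where
  | static : Ground static
  | dynamic : Ground dynamic
  | nonvar : Ground nonvar
  | con : ∀ c args, (∀ τ ∈ args, Ground τ) → Ground (con c args)

/-- All type variables of the type are below `n`. -/
inductive VarsBelow (n : ℕ) : Ty → Prop where
  | var : ∀ v, v < n → VarsBelow n (var v)
  | static : VarsBelow n static
  | dynamic : VarsBelow n dynamic
  | nonvar : VarsBelow n nonvar
  | con : ∀ c args, (∀ τ ∈ args, VarsBelow n τ) → VarsBelow n (con c args)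

end Ty

/-- A type definition `c(V₁,…,Vₙ) → f₁(T₁¹,…) ; … ; f_k(T_k¹,…)` for an
`n`-ary type constructor: the variables are represented by `0,…,arity-1`,
the alternatives are pairs of a function symbol and the list of argument types;
the function symbols are distinct and the argument types only use
variables among `0,…,arity-1`. -/
structure TypeDef where
  arity : ℕ
  alts : List (ℕ × List Ty)
  alts_nonempty : alts ≠ []
  alts_nodup : (alts.map Prod.fst).Nodup
  vars_bound : ∀ p ∈ alts, ∀ τ ∈ p.2, Ty.VarsBelow arity τ

/-- A type system: exactly one type definition for every type constructor
other than `static`, `dynamic` and `nonvar`. -/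
structure TypeSystem where
  defs : ℕ → TypeDef

mutual
/-- The type judgement `t : τ` relative to the type system `Γ`. -/
inductive HasType (Γ : TypeSystem) : Term → Ty → Prop where
  | dyn (t : Term) : HasType Γ t .dynamic
  | stat (t : Term) : t.Ground → HasType Γ t .static
  | nv (f : ℕ) (ts : List Term) : HasType Γ (.app f ts) .nonvar
  | con (c : ℕ) (σ : ℕ → Ty) (f : ℕ) (Ts : List Ty) (ts : List Term)
      (hσ : ∀ v, (σ v).Ground)
      (hmem : (f, Ts) ∈ (Γ.defs c).alts)
      (hargs : HasTypeArgs Γ ts (Ts.map (Ty.subst σ))) :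
      HasType Γ (.app f ts) (.con c ((List.range (Γ.defs c).arity).map σ))

/-- `HasTypeArgs Γ ts τs` : the terms `ts` pointwise have the types `τs`. -/
inductive HasTypeArgs (Γ : TypeSystem) : List Term → List Ty → Prop where
  | nil : HasTypeArgs Γ [] []
  | cons {t τ ts τs} : HasType Γ t τ → HasTypeArgs Γ ts τs →
      HasTypeArgs Γ (t :: ts) (τ :: τs)
end

/-- Atoms `p(t₁,…,tₙ)` over a countably infinite set of predicate symbols (ℕ). -/
structure Atom where
  pred : ℕ
  args : List Term

namespace Atom

/-- Substitutions apply to atoms argumentwise. -/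
def subst (θ : ℕ → Term) (A : Atom) : Atom := ⟨A.pred, A.args.map (Term.subst θ)⟩

/-- `B` is an instance of `A`. -/
def IsInstanceOf (B A : Atom) : Prop := ∃ θ : ℕ → Term, A.subst θ = B

/-- Two atoms are variants if each is an instance of the other. -/
def Variant (A B : Atom) : Prop := A.IsInstanceOf B ∧ B.IsInstanceOf A

end Atom

/-- A division: a set of expressions `p(τ₁,…,τₙ)` (represented as pairs of a
predicate symbol and a list of types), with all types ground and at most one
division per predicate. -/
def IsDivision (Δ : Set (ℕ × List Ty)) : Prop :=
  (∀ d ∈ Δ, ∀ τ ∈ d.2, τ.Ground) ∧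
  (∀ d ∈ Δ, ∀ d' ∈ Δ, d.1 = d'.1 → d = d')

/-- An atom `p(t₁,…,tₙ)` is safe wrt `Δ` iff there is `p(τ₁,…,τₙ) ∈ Δ`
with `tᵢ : τᵢ` for all `i`. -/
def SafeAtom (Γ : TypeSystem) (Δ : Set (ℕ × List Ty)) (A : Atom) : Prop :=
  ∃ τs : List Ty, (A.pred, τs) ∈ Δ ∧ HasTypeArgs Γ A.args τs

mutual
/-- `Gen Γ τ t s L`: `s` is a result of the partial generalisation mapping
`gen_τ(t)`, where `L` records (in order) the fresh variables chosen. -/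
inductive Gen (Γ : TypeSystem) : Ty → Term → Term → List ℕ → Prop where
  | static (t : Term) : Gen Γ .static t t []
  | dynamic (t : Term) (v : ℕ) : Gen Γ .dynamic t (.var v) [v]
  | nonvar (f : ℕ) (ts : List Term) (vs : List ℕ) (h : vs.length = ts.length) :
      Gen Γ .nonvar (.app f ts) (.app f (vs.map Term.var)) vs
  | con (c : ℕ) (σ : ℕ → Ty) (f : ℕ) (Ts : List Ty) (ts ss : List Term) (L : List ℕ)
      (hσ : ∀ v, (σ v).Ground)
      (hmem : (f, Ts) ∈ (Γ.defs c).alts)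
      (hargs : GenArgs Γ (Ts.map (Ty.subst σ)) ts ss L) :
      Gen Γ (.con c ((List.range (Γ.defs c).arity).map σ)) (.app f ts) (.app f ss) L

/-- Pointwise generalisation of a list of terms, collecting the fresh variables. -/
inductive GenArgs (Γ : TypeSystem) : List Ty → List Term → List Term → List ℕ → Prop where
  | nil : GenArgs Γ [] [] [] []
  | cons {τ t s L τs ts ss Ls} : Gen Γ τ t s L → GenArgs Γ τs ts ss Ls →
      GenArgs Γ (τ :: τs) (t :: ts) (s :: ss) (L ++ Ls)
end

/-- `GenAtom Γ Δ A B L`: `B` is a result of `gen_Δ(A)` with fresh variables `L`. -/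
def GenAtom (Γ : TypeSystem) (Δ : Set (ℕ × List Ty)) (A B : Atom) (L : List ℕ) : Prop :=
  B.pred = A.pred ∧
  ∃ τs : List Ty, (A.pred, τs) ∈ Δ ∧ HasTypeArgs Γ A.args τs ∧
    GenArgs Γ τs A.args B.args L

/-! Every fresh variable of `gen_τ(t)` stands for a subterm of `t`, and all its other variables
are variables of `t`. Sending each fresh variable to its subterm and fixing every other variable
recovers `t`: distinctness of the fresh variables makes this well defined, and their freshness
makes it compatible with fixing the variables of `t`. -/

namespace Term

theorem subst_app (θ : ℕ → Term) (f : ℕ) (ts : List Term) :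
    (app f ts).subst θ = app f (ts.map (subst θ)) := by
  rw [subst]
  simp

theorem subst_eq_self : ∀ (t : Term) (θ : ℕ → Term),
    (∀ v, Occurs v t → θ v = var v) → t.subst θ = t
  | var v, θ, h => by simpa [subst] using h v .var
  | app f ts, θ, h => by
    rw [subst_app]
    congr 1
    refine List.map_congr_left (fun t ht => ?_) |>.trans ts.map_id
    exact subst_eq_self t θ fun v hv => h v (.app f ts t ht hv)
decreasing_by
  have := List.sizeOf_lt_of_mem ht
  simp only [app.sizeOf_spec]
  omega

end Term

theorem List.Nodup.exists_map_eq {α β : Type*} [DecidableEq α] [Nonempty β] :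
    ∀ {as : List α} {bs : List β}, as.Nodup → as.length = bs.length → ∃ f : α → β, as.map f = bs
  | [], [], _, _ => ⟨fun _ => Classical.arbitrary _, rfl⟩
  | a :: as, b :: bs, hnd, hlen => by
    obtain ⟨ha, has⟩ := List.nodup_cons.mp hnd
    obtain ⟨f, hf⟩ := has.exists_map_eq (Nat.succ.inj hlen)
    refine ⟨Function.update f a b, ?_⟩
    rw [List.map_cons, Function.update_self, ← hf]
    congr 1
    exact List.map_congr_left fun a' ha' => Function.update_of_ne (ne_of_mem_of_not_mem ha' ha) _ _

/- Quantifying over every `θ` that agrees with `θ₀` on the fresh variables, rather than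
producing one matcher, is what lets the matchers of the arguments be glued along the
pairwise disjoint lists of fresh variables. -/
theorem Gen.exists_subst_eq {Γ : TypeSystem} {τ : Ty} {t s : Term} {L : List ℕ}
    (hgen : Gen Γ τ t s L) (hL : L.Nodup) :
    ∃ θ₀ : ℕ → Term, ∀ θ : ℕ → Term, (∀ v ∈ L, θ v = θ₀ v) →
      (∀ v, Term.Occurs v t → θ v = .var v) → s.subst θ = t := by
  induction hgen using Gen.rec
    (motive_2 := fun _ ts ss L _ => L.Nodup → ∃ θ₀ : ℕ → Term, ∀ θ : ℕ → Term,
      (∀ v ∈ L, θ v = θ₀ v) → (∀ t ∈ ts, ∀ v, Term.Occurs v t → θ v = .var v) →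
        ss.map (Term.subst θ) = ts) with
  | static t => exact ⟨Term.var, fun θ _ hfix => t.subst_eq_self θ hfix⟩
  | dynamic t v => exact ⟨fun _ => t, fun θ hθ _ => by simpa [Term.subst] using hθ v (by simp)⟩
  | nonvar f ts vs hlen =>
    have : Nonempty Term := ⟨.var 0⟩
    obtain ⟨θ₀, hθ₀⟩ := hL.exists_map_eq hlen
    refine ⟨θ₀, fun θ hθ _ => ?_⟩
    rw [Term.subst_app, List.map_map, ← hθ₀]
    congr 1
    exact List.map_congr_left fun v hv => by simpa [Term.subst] using hθ v hv
  | con c σ f Ts ts ss L hσ hmem hargs ih =>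
    obtain ⟨θ₀, hθ₀⟩ := ih hL
    exact ⟨θ₀, fun θ hθ hfix => by
      rw [Term.subst_app, hθ₀ θ hθ fun t ht v hv => hfix v (.app f ts t ht hv)]⟩
  | nil => exact ⟨Term.var, fun _ _ _ => rfl⟩
  | @cons τ t s L τs ts ss Ls _ _ ih ihs hLLs =>
    obtain ⟨hL, hLs, hdisj⟩ := List.nodup_append.mp hLLs
    obtain ⟨θ₀, hθ₀⟩ := ih hL
    obtain ⟨θ₀s, hθ₀s⟩ := ihs hLs
    refine ⟨fun v => if v ∈ L then θ₀ v else θ₀s v, fun θ hθ hfix => ?_⟩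
    have hθL : ∀ v ∈ L, θ v = θ₀ v := fun v hv => by
      simpa [hv] using hθ v (List.mem_append_left _ hv)
    have hθLs : ∀ v ∈ Ls, θ v = θ₀s v := fun v hv => by
      have hvL : v ∉ L := fun hvL => hdisj v hvL v hv rfl
      simpa [hvL] using hθ v (List.mem_append_right _ hv)
    rw [List.map_cons, hθ₀ θ hθL (hfix t List.mem_cons_self),
      hθ₀s θ hθLs fun t' ht' => hfix t' (List.mem_cons_of_mem _ ht')]

/-- **gen is a generalisation at the term level.** For every ground type `τ` and
every term `t` with `t : τ`, the term `t` is an instance of `gen_τ(t)`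
(for any choice of distinct fresh variables, not occurring in `t`, used in
computing `gen_τ(t)`). -/
theorem instance_of_gen (Γ : TypeSystem) (τ : Ty) (t : Term) (hτ : τ.Ground)
    (ht : HasType Γ t τ) (s : Term) (L : List ℕ) (hgen : Gen Γ τ t s L)
    (hnodup : L.Nodup) (hfresh : ∀ v ∈ L, ¬ Term.Occurs v t) :
    t.IsInstanceOf s := by
  obtain ⟨θ₀, hθ₀⟩ := hgen.exists_subst_eq hnodup
  refine ⟨fun v => if v ∈ L then θ₀ v else .var v, hθ₀ _ (fun v hv => if_pos hv) ?_⟩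
  intro v hv
  exact if_neg fun hvL => hfresh v hvL hv
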